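/- arXiv:1912.07641 — 4 statements merged into one kernel-verified Lean document; each statement's English description precedes it below -/
import Mathlib

section
/- The set of pairs (z, K) ∈ ℂ × ℝ^{(p+l)×(n+p)} satisfying (i) rank(D̄(z) + F K) < ρ and (ii) det(C(K_SS,K_SI) C(K_SS,K_SI)^T) > 0 is in general non-convex: specifically, if (z', K') is feasible, then (z', K'') with (K_SS'', K_SI'', K_OS'', K_OI'') = (K_SS', −K_SI'−2I_p, K_OS', −K_OI') is also feasible, but their midpoint (z', (K'+K'')/2) violates the controllability constraint since C(K_SS', −I_p) = 0. -/
open Matrix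

/-- Controllability matrix of the perturbed pair `(A + B*KSS, B*(1 + KSI))`. -/
noncomputable def ctrb {n p : ℕ} (A : Matrix (Fin n) (Fin n) ℝ) (B : Matrix (Fin n) (Fin p) ℝ)
    (KSS : Matrix (Fin p) (Fin n) ℝ) (KSI : Matrix (Fin p) (Fin p) ℝ) :
    Matrix (Fin n) (Fin n × Fin p) ℝ :=
  Matrix.of fun i jk => (((A + B * KSS) ^ (jk.1 : ℕ) * (B * (1 + KSI)) : Matrix (Fin n) (Fin p) ℝ) i jk.2)

/-- The matrix pencil `D̄(z) = [[zIₙ − Ā, −B̄],[Ḡ, H̄]]` of the original system, over ℂ. -/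
noncomputable def pencil {n p q : ℕ} (A : Matrix (Fin n) (Fin n) ℝ) (B : Matrix (Fin n) (Fin p) ℝ)
    (G : Matrix (Fin q) (Fin n) ℝ) (H : Matrix (Fin q) (Fin p) ℝ) (z : ℂ) :
    Matrix (Fin n ⊕ Fin q) (Fin n ⊕ Fin p) ℂ :=
  Matrix.fromBlocks (z • 1 - A.map (algebraMap ℝ ℂ)) (-(B.map (algebraMap ℝ ℂ)))
    (G.map (algebraMap ℝ ℂ)) (H.map (algebraMap ℝ ℂ))

/-- `F = [[−B̄, 0],[H̄, Π]]`. -/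
noncomputable def Fmat {n p q l : ℕ} (B : Matrix (Fin n) (Fin p) ℝ)
    (H : Matrix (Fin q) (Fin p) ℝ) (Pi : Matrix (Fin q) (Fin l) ℝ) :
    Matrix (Fin n ⊕ Fin q) (Fin p ⊕ Fin l) ℝ :=
  Matrix.fromBlocks (-B) 0 H Pi

theorem stmt5 {n p q l : ℕ} (hn : 0 < n) (ρ : ℕ)
    (A : Matrix (Fin n) (Fin n) ℝ) (B : Matrix (Fin n) (Fin p) ℝ)
    (G : Matrix (Fin q) (Fin n) ℝ) (H : Matrix (Fin q) (Fin p) ℝ)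
    (Pi : Matrix (Fin q) (Fin l) ℝ)
    (z : ℂ)
    (KSS : Matrix (Fin p) (Fin n) ℝ) (KSI : Matrix (Fin p) (Fin p) ℝ)
    (KOS : Matrix (Fin l) (Fin n) ℝ) (KOI : Matrix (Fin l) (Fin p) ℝ)
    (hrank : (pencil A B G H z +
        (Fmat B H Pi * Matrix.fromBlocks KSS KSI KOS KOI).map (algebraMap ℝ ℂ)).rank < ρ)
    (hctrb : 0 < (ctrb A B KSS KSI * (ctrb A B KSS KSI)ᵀ).det) :
    ((pencil A B G H z +
        (Fmat B H Pi * Matrix.fromBlocks KSS (-KSI - 2) KOS (-KOI)).map (algebraMap ℝ ℂ)).rank < ρ ∧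
      0 < (ctrb A B KSS (-KSI - 2) * (ctrb A B KSS (-KSI - 2))ᵀ).det) ∧
    ¬ (0 < (ctrb A B ((1 / 2 : ℝ) • (KSS + KSS)) ((1 / 2 : ℝ) • (KSI + (-KSI - 2))) *
        (ctrb A B ((1 / 2 : ℝ) • (KSS + KSS)) ((1 / 2 : ℝ) • (KSI + (-KSI - 2))))ᵀ).det) := by
    -- abbreviate the complexification map
  have hmapneg : ∀ {a b : ℕ} (M : Matrix (Fin a) (Fin b) ℝ),
      (-M).map (algebraMap ℝ ℂ) = -(M.map (algebraMap ℝ ℂ)) := fun M => by ext i j; simp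
  have h2 : ((-KSI - 2 : Matrix (Fin p) (Fin p) ℝ)).map (algebraMap ℝ ℂ)
      = -(KSI.map (algebraMap ℝ ℂ)) - 2 := by
    rw [show ((-KSI - 2 : Matrix (Fin p) (Fin p) ℝ)).map (algebraMap ℝ ℂ)
        = (algebraMap ℝ ℂ).mapMatrix (-KSI - 2) from rfl, map_sub, map_neg, map_ofNat]
    rfl
  refine ⟨⟨?_, ?_⟩, ?_⟩
  · -- rank constraint for the reflected gain
    set U : Matrix (Fin n ⊕ Fin p) (Fin n ⊕ Fin p) ℂ := Matrix.fromBlocks 1 0 0 (-1) with hUdef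
    have hUU : U * U = 1 := by
      simp [hUdef, Matrix.fromBlocks_multiply, ← Matrix.fromBlocks_one]
    have hdet : IsUnit U.det := by
      have := congrArg Matrix.det hUU
      rw [Matrix.det_mul, Matrix.det_one] at this
      exact IsUnit.of_mul_eq_one _ this
    have key : pencil A B G H z +
          (Fmat B H Pi * Matrix.fromBlocks KSS (-KSI - 2) KOS (-KOI)).map (algebraMap ℝ ℂ)
        = (pencil A B G H z +
          (Fmat B H Pi * Matrix.fromBlocks KSS KSI KOS KOI).map (algebraMap ℝ ℂ)) * U := by
      have hmap0 : ∀ {a b : ℕ}, ((0 : Matrix (Fin a) (Fin b) ℝ)).map (algebraMap ℝ ℂ)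
          = 0 := by intro a b; ext i j; simp
      unfold pencil Fmat
      simp only [Matrix.map_mul, Matrix.fromBlocks_map]
      rw [hUdef]
      simp only [Matrix.fromBlocks_multiply, Matrix.fromBlocks_add]
      refine Matrix.fromBlocks_inj.mpr ⟨?_, ?_, ?_, ?_⟩ <;>
      · simp only [hmapneg, hmap0, h2,
          show (2 : Matrix (Fin p) (Fin p) ℂ) = 1 + 1 from (one_add_one_eq_two).symm,
          Matrix.mul_zero, Matrix.zero_mul, add_zero, zero_add, Matrix.mul_one,
          Matrix.neg_mul, Matrix.mul_neg, Matrix.mul_sub, Matrix.mul_add]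
        try abel
    rw [key, Matrix.rank_mul_eq_left_of_isUnit_det _ _ hdet]
    exact hrank
  · -- controllability constraint for the reflected gain
    have hone : (1 : Matrix (Fin p) (Fin p) ℝ) + (-KSI - 2) = -(1 + KSI) := by
      rw [← one_add_one_eq_two]; abel
    have hBneg : B * ((1 : Matrix (Fin p) (Fin p) ℝ) + (-KSI - 2)) = -(B * (1 + KSI)) := by
      rw [hone, Matrix.mul_neg]
    have hc : ctrb A B KSS (-KSI - 2) = -(ctrb A B KSS KSI) := by
      unfold ctrb
      ext i jk
      simp only [Matrix.of_apply, Matrix.neg_apply]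
      rw [hBneg, Matrix.mul_neg, Matrix.neg_apply]
    rw [hc, Matrix.transpose_neg, Matrix.neg_mul, Matrix.mul_neg, neg_neg]
    exact hctrb
  · -- the midpoint kills controllability
    have hKSI : (1 / 2 : ℝ) • (KSI + (-KSI - 2)) = (-1 : Matrix (Fin p) (Fin p) ℝ) := by
      rw [show KSI + (-KSI - 2) = -((1 : Matrix (Fin p) (Fin p) ℝ) + 1) by
        rw [← one_add_one_eq_two]; abel]
      rw [smul_neg, smul_add, ← add_smul]
      norm_num
    have hzero : B * ((1 : Matrix (Fin p) (Fin p) ℝ) + (-1)) = 0 := by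
      rw [add_neg_cancel, Matrix.mul_zero]
    have hc0 : ctrb A B ((1 / 2 : ℝ) • (KSS + KSS)) ((1 / 2 : ℝ) • (KSI + (-KSI - 2))) = 0 := by
      rw [hKSI]
      unfold ctrb
      ext i jk
      simp only [Matrix.of_apply, Matrix.zero_apply]
      rw [hzero, Matrix.mul_zero, Matrix.zero_apply]
    rw [hc0, Matrix.zero_mul]
    haveI : Nonempty (Fin n) := Fin.pos_iff_nonempty.mp hn
    rw [Matrix.det_zero]
    exact lt_irrefl 0
end

section
/- Let M ∈ ℝ^{r×c} with r < c, and consider the problems: (P1) minimize ‖v‖₀ over nonzero v ∈ ℝ^c with M v = 0; (P2) minimize ‖K_O‖₀ over K_O ∈ ℝ^{c×c} with rank([M; I_c + K_O]) < c. If v* is optimal for (P1) and K_O* is optimal for (P2), then ‖K_O*‖₀ = ‖v*‖₀. -/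
open Matrix

lemma rank_lt_iff_aux {m n : Type*} [Fintype m] [Fintype n] [DecidableEq n]
    (A : Matrix m n ℝ) :
    A.rank < Fintype.card n ↔ ∃ v, v ≠ 0 ∧ A.mulVec v = 0 := by
  have hrn := LinearMap.finrank_range_add_finrank_ker A.mulVecLin
  rw [Module.finrank_pi ℝ] at hrn
  have hiff : LinearMap.ker A.mulVecLin ≠ ⊥ ↔ ∃ v, v ≠ 0 ∧ A.mulVec v = 0 := by
    rw [Submodule.ne_bot_iff]
    constructor
    · rintro ⟨v, hv, hv0⟩; exact ⟨v, hv0, hv⟩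
    · rintro ⟨v, hv0, hv⟩; exact ⟨v, hv, hv0⟩
  rw [← hiff]
  constructor
  · intro h hbot
    rw [hbot, finrank_bot] at hrn
    rw [Matrix.rank] at h; omega
  · intro h
    have : 0 < Module.finrank ℝ (LinearMap.ker A.mulVecLin) := by
      rcases Nat.eq_zero_or_pos (Module.finrank ℝ (LinearMap.ker A.mulVecLin)) with h0 | h0
      · exact absurd (Submodule.finrank_eq_zero.mp h0) h
      · exact h0
    rw [Matrix.rank]; omega

theorem stmt9 {r c : ℕ} (hrc : r < c) (M : Matrix (Fin r) (Fin c) ℝ)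
    (vstar : Fin c → ℝ) (hv0 : vstar ≠ 0) (hMv : M.mulVec vstar = 0)
    (hvopt : ∀ v : Fin c → ℝ, v ≠ 0 → M.mulVec v = 0 →
      (Finset.univ.filter fun i => vstar i ≠ 0).card ≤
        (Finset.univ.filter fun i => v i ≠ 0).card)
    (KOstar : Matrix (Fin c) (Fin c) ℝ)
    (hKfeas : (Matrix.fromRows M (1 + KOstar)).rank < c)
    (hKopt : ∀ KO : Matrix (Fin c) (Fin c) ℝ, (Matrix.fromRows M (1 + KO)).rank < c →
      ((Finset.univ : Finset (Fin c × Fin c)).filter fun ij => KOstar ij.1 ij.2 ≠ 0).card ≤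
        ((Finset.univ : Finset (Fin c × Fin c)).filter fun ij => KO ij.1 ij.2 ≠ 0).card) :
    ((Finset.univ : Finset (Fin c × Fin c)).filter fun ij => KOstar ij.1 ij.2 ≠ 0).card =
      (Finset.univ.filter fun i => vstar i ≠ 0).card := by
  -- extract nonzero vector from feasibility of KOstar
  obtain ⟨v, hvne, hvker⟩ := (rank_lt_iff_aux (Matrix.fromRows M (1 + KOstar))).mp
    (by simpa only [Fintype.card_fin] using hKfeas)
  rw [Matrix.fromRows_mulVec] at hvker
  have hMv' : M.mulVec v = 0 := by
    funext i; exact congrFun hvker (Sum.inl i)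
  have hIK : (1 + KOstar).mulVec v = 0 := by
    funext i; exact congrFun hvker (Sum.inr i)
  apply le_antisymm
  · -- build KO from vstar
    obtain ⟨j, hj⟩ : ∃ j, vstar j ≠ 0 := Function.ne_iff.mp hv0
    set KO : Matrix (Fin c) (Fin c) ℝ :=
      fun i k => if k = j then -vstar i / vstar j else 0 with hKO
    have hfeas : (Matrix.fromRows M (1 + KO)).rank < c := by
      have := (rank_lt_iff_aux (Matrix.fromRows M (1 + KO))).mpr
      simp only [Fintype.card_fin] at this
      apply this
      refine ⟨vstar, hv0, ?_⟩
      rw [Matrix.fromRows_mulVec, hMv]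
      have : (1 + KO).mulVec vstar = 0 := by
        funext i
        simp only [Matrix.add_mulVec, Matrix.one_mulVec, Pi.add_apply]
        have : KO.mulVec vstar i = -vstar i := by
          simp only [Matrix.mulVec, dotProduct, hKO]
          rw [Finset.sum_eq_single j]
          · rw [if_pos rfl, div_mul_cancel₀ _ hj]
          · intro b _ hb; simp [hb]
          · simp
        rw [this]; simp
      rw [this]; funext x; cases x <;> rfl
    refine (hKopt KO hfeas).trans (le_of_eq ?_)
    -- card of nonzero entries of KO equals card of support of vstar
    apply Finset.card_bij (fun (ij : Fin c × Fin c) _ => ij.1)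
    · rintro ⟨i, k⟩ h
      simp only [Finset.mem_filter, Finset.mem_univ, true_and, hKO] at h ⊢
      by_cases hk : k = j
      · simp only [hk, if_true] at h
        intro h0; apply h; rw [h0]; simp
      · simp [hk] at h
    · rintro ⟨i, k⟩ h ⟨i', k'⟩ h' hii
      simp only [Finset.mem_filter, Finset.mem_univ, true_and, hKO] at h h'
      have hk : k = j := by by_contra hk; simp [hk] at h
      have hk' : k' = j := by by_contra hk; simp [hk] at h'
      simp_all
    · intro i hi
      simp only [Finset.mem_filter, Finset.mem_univ, true_and] at hi
      refine ⟨(i, j), ?_, rfl⟩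
      simp only [Finset.mem_filter, Finset.mem_univ, true_and, hKO, if_true]
      simp [div_eq_zero_iff, hi, hj]
  · -- lower bound: support of v injects into nonzero entries of KOstar
    refine (hvopt v hvne hMv').trans ?_
    have hx : ∀ i, ∃ j, v i ≠ 0 → KOstar i j ≠ 0 := by
      intro i
      by_cases hvi : v i = 0
      · exact ⟨⟨0, by omega⟩, fun h => absurd hvi h⟩
      refine ?_
      have : KOstar.mulVec v i = -v i := by
        have := congrFun hIK i
        simp only [Matrix.add_mulVec, Matrix.one_mulVec, Pi.add_apply, Pi.zero_apply] at this
        linarith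
      have hsum : ∑ j, KOstar i j * v j ≠ 0 := by
        rw [show (∑ j, KOstar i j * v j) = KOstar.mulVec v i from rfl, this]
        simpa using hvi
      obtain ⟨j, _, hjne⟩ := Finset.exists_ne_zero_of_sum_ne_zero hsum
      exact ⟨j, fun _ => fun h => hjne (by simp [h])⟩
    choose g hg using hx
    apply Finset.card_le_card_of_injOn (fun i => (i, g i))
    · intro i hi
      simp only [Finset.mem_filter, Finset.mem_univ, true_and] at hi ⊢
      simpa using hg i (by simpa using hi)
    · intro a ha b hb hab
      exact congrArg Prod.fst hab
end

section
/- Suppose (Ā, B̄) is controllable, i.e., [B̄, ĀB̄, …, Ā^{n−1}B̄] has full row rank n. Then the perturbed pair (Ā + B̄K_SS, B̄(I_p + K_SI)) is controllable if and only if v B̄ K_SI ≠ −v B̄ for every left eigenvector v ∈ ℂ^{1×n} of Ā + B̄ K_SS. -/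
/-!
By the Hautus (PBH) test, a pair `(A', B')` is controllable iff no left eigenvector `v` of `A'`
satisfies `v B' = 0`: the left annihilator of the Krylov blocks `A'^k B'` is `A'`-invariant
(Cayley–Hamilton lets `k` range over all of `ℕ`), so when it is nonzero it contains an eigenvector
of `A'` over `ℂ`. For `B' = B (1 + K_SI)` the condition `v B' = 0` reads `v B K_SI = - v B`.
-/

open Matrix

/-- Controllability matrix `[B, AB, …, A^(n-1)B]` of the pair `(A, B)`. -/
noncomputable def ctrbM {n p : ℕ} (A : Matrix (Fin n) (Fin n) ℝ) (B : Matrix (Fin n) (Fin p) ℝ) :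
    Matrix (Fin n) (Fin n × Fin p) ℝ :=
  Matrix.of fun i jk => ((A ^ (jk.1 : ℕ) * B : Matrix (Fin n) (Fin p) ℝ) i jk.2)

namespace Matrix

variable {K : Type*} [Field K] {m ι : Type*} [Fintype m]

theorem rank_eq_card_iff_vecMul_injective [Fintype ι] (M : Matrix m ι K) :
    M.rank = Fintype.card m ↔ Function.Injective M.vecMul := by
  rw [vecMul_injective_iff, linearIndependent_iff_card_eq_finrank_span, rank_eq_finrank_span_row,
    Set.finrank, eq_comm]

theorem vecMul_injective_map_ofReal_iff (M : Matrix m ι ℝ) :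
    Function.Injective (M.map (algebraMap ℝ ℂ)).vecMul ↔ Function.Injective M.vecMul := by
  simp only [← coe_vecMulLinear, injective_iff_map_eq_zero, vecMulLinear_apply]
  constructor
  · intro h v hv
    have : (algebraMap ℝ ℂ ∘ v) ᵥ* M.map (algebraMap ℝ ℂ) = 0 := by
      ext j
      rw [← RingHom.map_vecMul, hv, Pi.zero_apply, map_zero, Pi.zero_apply]
    funext i
    exact Complex.ofReal_injective (congrFun (h _ this) i)
  · intro h v hv
    have hre : (fun i => (v i).re) ᵥ* M = 0 := by
      funext j
      simpa [vecMul, dotProduct, Complex.re_sum] using congrArg Complex.re (congrFun hv j)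
    have him : (fun i => (v i).im) ᵥ* M = 0 := by
      funext j
      simpa [vecMul, dotProduct, Complex.im_sum] using congrArg Complex.im (congrFun hv j)
    funext i
    exact Complex.ext (congrFun (h _ hre) i) (congrFun (h _ him) i)

variable {n : ℕ} (A : Matrix (Fin n) (Fin n) K) (B : Matrix (Fin n) ι K)

open Polynomial in
theorem vecMul_pow_mul_eq_zero_of_forall_lt {v : Fin n → K}
    (h : ∀ k : Fin n, v ᵥ* (A ^ (k : ℕ) * B) = 0) (k : ℕ) : v ᵥ* (A ^ k * B) = 0 := by
  rw [pow_eq_aeval_mod_charpoly, aeval_eq_sum_range, Matrix.sum_mul, vecMul_sum]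
  refine Finset.sum_eq_zero fun i _ => ?_
  rw [smul_mul, vecMul_smul]
  by_cases hi : i < n
  · rw [h ⟨i, hi⟩, smul_zero]
  · rw [coeff_eq_zero_of_degree_lt, zero_smul]
    calc _ < A.charpoly.degree := degree_modByMonic_lt _ A.charpoly_monic
      _ = n := by rw [charpoly_degree_eq_dim, Fintype.card_fin]
      _ ≤ i := by exact_mod_cast not_lt.mp hi

end Matrix

/-- The left-kernel form of `rank [B, AB, …, A^(n-1)B] = n`. -/
def IsControllable {K ι : Type*} [Field K] {n : ℕ} (A : Matrix (Fin n) (Fin n) K)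
    (B : Matrix (Fin n) ι K) : Prop :=
  ∀ v : Fin n → K, (∀ k : Fin n, v ᵥ* (A ^ (k : ℕ) * B) = 0) → v = 0

section Hautus

variable {K ι : Type*} [Field K] [IsAlgClosed K] {n : ℕ}
  (A : Matrix (Fin n) (Fin n) K) (B : Matrix (Fin n) ι K)

theorem exists_left_eigenvector_vecMul_eq_zero {v : Fin n → K} (hv : v ≠ 0)
    (h : ∀ k : Fin n, v ᵥ* (A ^ (k : ℕ) * B) = 0) :
    ∃ (w : Fin n → K) (μ : K), w ≠ 0 ∧ w ᵥ* A = μ • w ∧ w ᵥ* B = 0 := by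
  let W : Submodule K (Fin n → K) := ⨅ k : ℕ, LinearMap.ker (A ^ k * B).vecMulLinear
  have mem_W (w : Fin n → K) : w ∈ W ↔ ∀ k : ℕ, w ᵥ* (A ^ k * B) = 0 := by
    simp [W, Submodule.mem_iInf]
  have hW : ∀ w ∈ W, A.vecMulLinear w ∈ W := by
    intro w hw
    rw [mem_W] at hw ⊢
    intro k
    rw [vecMulLinear_apply, vecMul_vecMul, ← Matrix.mul_assoc, ← pow_succ']
    exact hw (k + 1)
  have : Nontrivial W :=
    nontrivial_of_ne ⟨v, (mem_W v).2 (vecMul_pow_mul_eq_zero_of_forall_lt A B h)⟩ 0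
      (by simpa using hv)
  obtain ⟨μ, hμ⟩ := Module.End.exists_eigenvalue (A.vecMulLinear.restrict hW)
  obtain ⟨⟨w, hwW⟩, hw_eigen, hw0⟩ := hμ.exists_hasEigenvector
  refine ⟨w, μ, by simpa using hw0, ?_, by simpa using (mem_W w).1 hwW 0⟩
  simpa [Subtype.ext_iff] using Module.End.mem_eigenspace_iff.mp hw_eigen

theorem isControllable_iff_hautus :
    IsControllable A B ↔ ∀ (v : Fin n → K) (μ : K), v ≠ 0 → v ᵥ* A = μ • v → v ᵥ* B ≠ 0 := by
  constructor
  · intro hAB v μ hv hvA hvB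
    refine hv (hAB v fun k => ?_)
    have hpow : ∀ j : ℕ, v ᵥ* A ^ j = μ ^ j • v := by
      intro j
      induction j with
      | zero => simp
      | succ j ih => rw [pow_succ, ← vecMul_vecMul, ih, smul_vecMul, hvA, smul_smul, pow_succ]
    rw [← vecMul_vecMul, hpow, smul_vecMul, hvB, smul_zero]
  · intro hHautus v hv
    by_contra hv0
    obtain ⟨w, μ, hw0, hwA, hwB⟩ := exists_left_eigenvector_vecMul_eq_zero A B hv0 hv
    exact hHautus w μ hw0 hwA hwB

end Hautus

theorem rank_ctrbM_eq_iff_isControllable {n p : ℕ} (A : Matrix (Fin n) (Fin n) ℝ)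
    (B : Matrix (Fin n) (Fin p) ℝ) :
    (ctrbM A B).rank = n ↔ IsControllable (A.map (algebraMap ℝ ℂ)) (B.map (algebraMap ℝ ℂ)) := by
  have hmap : (ctrbM A B).map (algebraMap ℝ ℂ) =
      Matrix.of fun i jk =>
        (A.map (algebraMap ℝ ℂ) ^ (jk.1 : ℕ) * B.map (algebraMap ℝ ℂ)) i jk.2 := by
    ext i jk
    rw [of_apply, ← Matrix.map_pow, ← Matrix.map_mul]
    rfl
  have hrank := rank_eq_card_iff_vecMul_injective (ctrbM A B)
  rw [Fintype.card_fin] at hrank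
  rw [hrank, ← vecMul_injective_map_ofReal_iff, hmap,
    ← coe_vecMulLinear, injective_iff_map_eq_zero]
  refine forall_congr' fun v => imp_congr_left ?_
  simp [funext_iff, vecMul, dotProduct, Prod.forall]

theorem stmt10_general {n p : ℕ}
    (A : Matrix (Fin n) (Fin n) ℝ) (B : Matrix (Fin n) (Fin p) ℝ)
    (KSS : Matrix (Fin p) (Fin n) ℝ) (KSI : Matrix (Fin p) (Fin p) ℝ) :
    (ctrbM (A + B * KSS) (B * (1 + KSI))).rank = n ↔
      ∀ (v : Fin n → ℂ) (μ : ℂ), v ≠ 0 →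
        Matrix.vecMul v ((A + B * KSS).map (algebraMap ℝ ℂ)) = μ • v →
        Matrix.vecMul v ((B * KSI).map (algebraMap ℝ ℂ)) ≠
          -(Matrix.vecMul v (B.map (algebraMap ℝ ℂ))) := by
  rw [rank_ctrbM_eq_iff_isControllable, isControllable_iff_hautus]
  refine forall₂_congr fun v μ => imp_congr_right fun _ => imp_congr_right fun _ => ?_
  rw [Matrix.mul_add, Matrix.mul_one, Matrix.map_add _ (map_add _), vecMul_add, add_comm, ne_eq,
    ne_eq, add_eq_zero_iff_eq_neg]

theorem stmt10 {n p : ℕ}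
    (A : Matrix (Fin n) (Fin n) ℝ) (B : Matrix (Fin n) (Fin p) ℝ)
    (KSS : Matrix (Fin p) (Fin n) ℝ) (KSI : Matrix (Fin p) (Fin p) ℝ)
    (hctrb : (ctrbM A B).rank = n) :
    (ctrbM (A + B * KSS) (B * (1 + KSI))).rank = n ↔
      ∀ (v : Fin n → ℂ) (μ : ℂ), v ≠ 0 →
        Matrix.vecMul v ((A + B * KSS).map (algebraMap ℝ ℂ)) = μ • v →
        Matrix.vecMul v ((B * KSI).map (algebraMap ℝ ℂ)) ≠
          -(Matrix.vecMul v (B.map (algebraMap ℝ ℂ))) :=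
  stmt10_general A B KSS KSI
end

section
/- Let D ∈ ℝ^{(n+q)×(n+p)} have full row rank and F ∈ ℝ^{(n+q)×(p+l)}. Let D⁺F = Σ_{ℓ=1}^{rank(F)} σ_ℓ u_ℓ v_ℓᵀ be the singular value decomposition with σ₁ ≥ … ≥ σ_{rank(F)} > 0 and orthonormal {u_ℓ} ⊂ ℝ^{n+p}, {v_ℓ} ⊂ ℝ^{p+l}. For an integer ρ with n + q − rank(F) + 1 ≤ ρ ≤ n + q, define K̃ = −Σ_{ℓ=1}^{n+q−ρ+1} (1/σ_ℓ) v_ℓ u_ℓᵀ. Then D + F K̃ = D · Σ_{ℓ=n+q−ρ+2}^{n+p} u_ℓ u_ℓᵀ, and rank(D + F K̃) < ρ. -/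
/-!
Since `D D⁺ = 1`, we have `F = D G` with `G = D⁺ F`, and orthonormality of the `v_ℓ` gives
`G v_ℓ = σ_ℓ u_ℓ`. Hence `G K̃ = -∑_{ℓ < k} u_ℓ u_ℓᵀ` (`k = n + q - ρ + 1`, indices from `0`), and
completeness of the `u_ℓ` gives `D + F K̃ = D ∑_{ℓ ≥ k} u_ℓ u_ℓᵀ`.

For the rank, each `u_ℓ` with `ℓ < k` lies in the range of `D⁺`, so it is fixed by the symmetric
projection `D⁺ D`, i.e. `u_ℓᵀ = y_ℓᵀ D` with `y_ℓ = (D⁺)ᵀ u_ℓ`. These `k` vectors `y_ℓ` annihilate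
`D ∑_{ℓ ≥ k} u_ℓ u_ℓᵀ` from the left and are independent (`y_iᵀ D u_j = δ_ij`), so that matrix has
rank at most `n + q - k = ρ - 1`.
-/

open Matrix

/-- Moore–Penrose pseudoinverse of a full-row-rank matrix: `D⁺ = Dᵀ (D Dᵀ)⁻¹`. -/
noncomputable def pinvR {a b : ℕ} (D : Matrix (Fin a) (Fin b) ℝ) : Matrix (Fin b) (Fin a) ℝ :=
  Dᵀ * (D * Dᵀ)⁻¹

namespace Matrix

section Rank

variable {K l m n : Type*} [Field K] [Fintype l] [Fintype m] [Fintype n]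

theorem isUnit_of_rank_eq_card [DecidableEq m] {A : Matrix m m K} (h : A.rank = Fintype.card m) :
    IsUnit A := by
  rw [← mulVec_surjective_iff_isUnit]
  change Function.Surjective A.mulVecLin
  rw [← LinearMap.range_eq_top]
  exact Submodule.eq_top_of_finrank_eq (by rw [Module.finrank_fintype_fun_eq_card]; exact h)

theorem isUnit_mul_transpose_of_rank_eq_card [DecidableEq m] [LinearOrder K] [IsStrictOrderedRing K]
    {D : Matrix m n K} (h : D.rank = Fintype.card m) : IsUnit (D * Dᵀ) :=
  isUnit_of_rank_eq_card (by rw [rank_self_mul_transpose, h])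

theorem rank_add_card_le_of_mul_eq_zero_of_mul_eq_one [DecidableEq l] {A : Matrix l m K}
    {B : Matrix m n K} {C : Matrix m l K} (hAB : A * B = 0) (hAC : A * C = 1) :
    B.rank + Fintype.card l ≤ Fintype.card m := by
  have hA : Fintype.card l ≤ A.rank := by
    simpa [hAC, rank_one] using rank_mul_le_left A C
  have := rank_add_rank_le_card_of_mul_eq_zero hAB
  omega

end Rank

section Orthonormal

variable {R : Type*} {m n : Type*}

theorem of_mul_transpose_of_dotProduct_eq_ite [Semiring R] [Fintype m] {k : ℕ} {u : ℕ → m → R}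
    (hu : ∀ i < k, ∀ j < k, u i ⬝ᵥ u j = if i = j then (1 : R) else 0) :
    (of fun i : Fin k => u i) * (of fun i : Fin k => u i)ᵀ = 1 := by
  ext i j
  rw [mul_apply', one_apply]
  exact (hu i i.isLt j j.isLt).trans (by simp [Fin.ext_iff])

theorem sum_range_vecMulVec_self_of_dotProduct_eq_ite [CommRing R] {N : ℕ} {u : ℕ → Fin N → R}
    (hu : ∀ i < N, ∀ j < N, u i ⬝ᵥ u j = if i = j then (1 : R) else 0) :
    ∑ ℓ ∈ Finset.range N, vecMulVec (u ℓ) (u ℓ) = 1 := by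
  have hU := mul_eq_one_comm.mp (of_mul_transpose_of_dotProduct_eq_ite hu)
  rw [← hU]
  ext i j
  rw [sum_apply, ← Fin.sum_univ_eq_sum_range (fun ℓ => vecMulVec (u ℓ) (u ℓ) i j)]
  simp only [mul_apply, vecMulVec_apply, transpose_apply, of_apply]

theorem of_mul_sum_Ico_vecMulVec_self_eq_zero [Semiring R] [Fintype m] {k N : ℕ} {u : ℕ → m → R}
    (hu : ∀ i < N, ∀ j < N, u i ⬝ᵥ u j = if i = j then (1 : R) else 0) :
    (of fun i : Fin k => u i) * ∑ ℓ ∈ Finset.Ico k N, vecMulVec (u ℓ) (u ℓ) = 0 := by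
  rw [Matrix.mul_sum]
  refine Finset.sum_eq_zero fun ℓ hℓ => ?_
  obtain ⟨hkℓ, hℓN⟩ := Finset.mem_Ico.mp hℓ
  have hperp : (of fun i : Fin k => u i) *ᵥ u ℓ = 0 := by
    ext i
    change u i ⬝ᵥ u ℓ = 0
    exact (hu i (by omega) ℓ hℓN).trans (if_neg (by omega))
  rw [mul_vecMulVec, hperp, zero_vecMulVec]

theorem sum_smul_vecMulVec_mulVec_of_dotProduct_eq_ite [CommRing R] [Fintype n] {r j : ℕ}
    (c : ℕ → R) (u : ℕ → m → R) {v : ℕ → n → R}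
    (hv : ∀ i < r, ∀ j < r, v i ⬝ᵥ v j = if i = j then (1 : R) else 0) (hj : j < r) :
    (∑ ℓ ∈ Finset.range r, c ℓ • vecMulVec (u ℓ) (v ℓ)) *ᵥ v j = c j • u j := by
  rw [sum_mulVec, Finset.sum_eq_single_of_mem j (Finset.mem_range.mpr hj)]
  · rw [smul_mulVec, vecMulVec_mulVec, hv j hj j hj]
    simp
  · intro ℓ hℓ hne
    rw [smul_mulVec, vecMulVec_mulVec, hv ℓ (Finset.mem_range.mp hℓ) j hj, if_neg hne]
    simp

theorem mul_sum_inv_smul_vecMulVec [Field R] [Fintype n] {k : ℕ} {G : Matrix m n R}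
    {σ : ℕ → R} {u : ℕ → m → R} {v : ℕ → n → R} (hσ : ∀ ℓ < k, σ ℓ ≠ 0)
    (hGv : ∀ ℓ < k, G *ᵥ v ℓ = σ ℓ • u ℓ) :
    G * ∑ ℓ ∈ Finset.range k, (σ ℓ)⁻¹ • vecMulVec (v ℓ) (u ℓ) =
      ∑ ℓ ∈ Finset.range k, vecMulVec (u ℓ) (u ℓ) := by
  rw [Matrix.mul_sum]
  refine Finset.sum_congr rfl fun ℓ hℓ => ?_
  have hℓk := Finset.mem_range.mp hℓ
  rw [← smul_vecMulVec, mul_vecMulVec, mulVec_smul, hGv ℓ hℓk, smul_smul,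
    inv_mul_cancel₀ (hσ ℓ hℓk), one_smul]

theorem of_mul_eq_self_of_mulVec_eq [CommSemiring R] [Fintype m] {k : ℕ} {u : ℕ → m → R}
    {P : Matrix m m R} (hP : Pᵀ = P) (hPu : ∀ i < k, P *ᵥ u i = u i) :
    (of fun i : Fin k => u i) * P = of fun i : Fin k => u i := by
  ext i j
  change (u i ᵥ* P) j = u i j
  rw [← mulVec_transpose, hP, hPu i i.isLt]

theorem rank_mul_sum_Ico_vecMulVec_self_add_le [Field R] [Fintype m] [Fintype n] {k N : ℕ}
    {u : ℕ → m → R} (hu : ∀ i < N, ∀ j < N, u i ⬝ᵥ u j = if i = j then (1 : R) else 0)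
    (hk : k ≤ N) {D : Matrix n m R} {Y : Matrix (Fin k) n R}
    (hY : Y * D = of fun i : Fin k => u i) :
    (D * ∑ ℓ ∈ Finset.Ico k N, vecMulVec (u ℓ) (u ℓ)).rank + k ≤ Fintype.card n := by
  have huk : ∀ i < k, ∀ j < k, u i ⬝ᵥ u j = if i = j then (1 : R) else 0 :=
    fun i hi j hj => hu i (by omega) j (by omega)
  simpa using rank_add_card_le_of_mul_eq_zero_of_mul_eq_one
    (A := Y) (C := D * (of fun i : Fin k => u i)ᵀ)
    (by rw [← Matrix.mul_assoc, hY, of_mul_sum_Ico_vecMulVec_self_eq_zero hu])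
    (by rw [← Matrix.mul_assoc, hY, of_mul_transpose_of_dotProduct_eq_ite huk])

end Orthonormal

end Matrix

theorem mul_pinvR {a b : ℕ} {D : Matrix (Fin a) (Fin b) ℝ} (hD : D.rank = a) :
    D * pinvR D = 1 := by
  have hDD : IsUnit (D * Dᵀ) := isUnit_mul_transpose_of_rank_eq_card (by simpa using hD)
  rw [pinvR, ← Matrix.mul_assoc, mul_nonsing_inv _ ((isUnit_iff_isUnit_det _).mp hDD)]

theorem transpose_pinvR_mul_self {a b : ℕ} (D : Matrix (Fin a) (Fin b) ℝ) :
    (pinvR D * D)ᵀ = pinvR D * D := by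
  simp [pinvR, transpose_mul, transpose_nonsing_inv, Matrix.mul_assoc]

theorem stmt14_general {n p q l : ℕ}
    (D : Matrix (Fin (n + q)) (Fin (n + p)) ℝ) (hD : D.rank = n + q)
    (F : Matrix (Fin (n + q)) (Fin (p + l)) ℝ)
    (σ : ℕ → ℝ) (u : ℕ → Fin (n + p) → ℝ) (v : ℕ → Fin (p + l) → ℝ)
    (hσpos : ∀ ℓ < F.rank, 0 < σ ℓ)
    (hu : ∀ i < n + p, ∀ j < n + p, u i ⬝ᵥ u j = if i = j then (1 : ℝ) else 0)
    (hv : ∀ i < F.rank, ∀ j < F.rank, v i ⬝ᵥ v j = if i = j then (1 : ℝ) else 0)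
    (hsvd : pinvR D * F = ∑ ℓ ∈ Finset.range F.rank, σ ℓ • Matrix.vecMulVec (u ℓ) (v ℓ))
    (ρ : ℕ) (hρ1 : n + q - F.rank + 1 ≤ ρ) (hρ2 : ρ ≤ n + q)
    (K : Matrix (Fin (p + l)) (Fin (n + p)) ℝ)
    (hK : K = -∑ ℓ ∈ Finset.range (n + q - ρ + 1), (σ ℓ)⁻¹ • Matrix.vecMulVec (v ℓ) (u ℓ)) :
    D + F * K = D * ∑ ℓ ∈ Finset.Ico (n + q - ρ + 1) (n + p), Matrix.vecMulVec (u ℓ) (u ℓ) ∧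
      (D + F * K).rank < ρ := by
  set G := pinvR D * F
  set k := n + q - ρ + 1
  have hDP : D * pinvR D = 1 := mul_pinvR hD
  have hFD : F = D * G := by rw [← Matrix.mul_assoc, hDP, Matrix.one_mul]
  have hrank : F.rank ≤ n + p := by
    simpa [← hFD] using (rank_mul_le_right D G).trans (rank_le_card_height G)
  have hGv : ∀ ℓ < F.rank, G *ᵥ v ℓ = σ ℓ • u ℓ := fun ℓ hℓ => by
    rw [hsvd]; exact sum_smul_vecMulVec_mulVec_of_dotProduct_eq_ite σ u hv hℓ
  have hu_eq : ∀ ℓ < F.rank, u ℓ = G *ᵥ ((σ ℓ)⁻¹ • v ℓ) := fun ℓ hℓ => by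
    rw [mulVec_smul, hGv ℓ hℓ, smul_smul, inv_mul_cancel₀ (hσpos ℓ hℓ).ne', one_smul]
  have hGK : G * K = -∑ ℓ ∈ Finset.range k, vecMulVec (u ℓ) (u ℓ) := by
    rw [hK, Matrix.mul_neg, mul_sum_inv_smul_vecMulVec (fun ℓ hℓ => (hσpos ℓ (by omega)).ne')
      (fun ℓ hℓ => hGv ℓ (by omega))]
  have hsplit : D + F * K = D * ∑ ℓ ∈ Finset.Ico k (n + p), vecMulVec (u ℓ) (u ℓ) := by
    rw [Finset.sum_Ico_eq_sub _ (by omega), Matrix.mul_sub,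
      sum_range_vecMulVec_self_of_dotProduct_eq_ite hu, Matrix.mul_one, hFD, Matrix.mul_assoc,
      hGK, Matrix.mul_neg, sub_eq_add_neg]
  have hPu : ∀ ℓ < k, (pinvR D * D) *ᵥ u ℓ = u ℓ := fun ℓ hℓ => by
    rw [hu_eq ℓ (by omega), mulVec_mulVec, Matrix.mul_assoc, ← Matrix.mul_assoc D, hDP,
      Matrix.one_mul]
  have hbound := rank_mul_sum_Ico_vecMulVec_self_add_le hu (by omega)
    (Y := (of fun i : Fin k => u i) * pinvR D)
    (by rw [Matrix.mul_assoc, of_mul_eq_self_of_mulVec_eq (transpose_pinvR_mul_self D) hPu])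
  refine ⟨hsplit, ?_⟩
  rw [hsplit]
  simp only [Fintype.card_fin] at hbound
  omega

theorem stmt14 {n p q l : ℕ}
    (D : Matrix (Fin (n + q)) (Fin (n + p)) ℝ) (hD : D.rank = n + q)
    (F : Matrix (Fin (n + q)) (Fin (p + l)) ℝ)
    (σ : ℕ → ℝ) (u : ℕ → Fin (n + p) → ℝ) (v : ℕ → Fin (p + l) → ℝ)
    (hσpos : ∀ ℓ < F.rank, 0 < σ ℓ)
    (hσdesc : ∀ i j : ℕ, i ≤ j → j < F.rank → σ j ≤ σ i)
    (hu : ∀ i < n + p, ∀ j < n + p, u i ⬝ᵥ u j = if i = j then (1 : ℝ) else 0)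
    (hv : ∀ i < F.rank, ∀ j < F.rank, v i ⬝ᵥ v j = if i = j then (1 : ℝ) else 0)
    (hsvd : pinvR D * F = ∑ ℓ ∈ Finset.range F.rank, σ ℓ • Matrix.vecMulVec (u ℓ) (v ℓ))
    (ρ : ℕ) (hρ1 : n + q - F.rank + 1 ≤ ρ) (hρ2 : ρ ≤ n + q)
    (K : Matrix (Fin (p + l)) (Fin (n + p)) ℝ)
    (hK : K = -∑ ℓ ∈ Finset.range (n + q - ρ + 1), (σ ℓ)⁻¹ • Matrix.vecMulVec (v ℓ) (u ℓ)) :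
    D + F * K = D * ∑ ℓ ∈ Finset.Ico (n + q - ρ + 1) (n + p), Matrix.vecMulVec (u ℓ) (u ℓ) ∧
      (D + F * K).rank < ρ :=
  stmt14_general D hD F σ u v hσpos hu hv hsvd ρ hρ1 hρ2 K hK
end
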